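/- If S₀ is a nonzero subspace of V such that L_k(S₀) is join irreducible in Θ_k, then M := MPI(L_k(S₀)) is an irreducible ground-state space: there do not exist k-local FF ground-state spaces G₁, G₂ with G₁ < M, G₂ < M (proper subspaces of M), and G₁ ⊔ G₂ = M. -/

import Mathlib

/-!
Setup: `n` particles with local dimensions `d : Fin n → ℕ`.
`V d` is the `n`-particle space of functions `(∀ i, Fin (d i)) → ℂ`.
For `J : Finset (Fin n)`, `PConfig d J` is the type of `J`-configurations and
`VJ d J` the corresponding space.  `merge`, `contrL` (the contraction `ψ ↦ ψ_b`),
the reduced space `red d J S`, the tuple `Lk d S`, the maximal pre-image `MPI`,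
and `k`-local frustration-free ground-state spaces are as in the paper.
-/

namespace GSS

variable {n : ℕ}

abbrev Config (d : Fin n → ℕ) : Type := ∀ i : Fin n, Fin (d i)

abbrev V (d : Fin n → ℕ) : Type := Config d → ℂ

abbrev PConfig (d : Fin n → ℕ) (J : Finset (Fin n)) : Type := ∀ i : J, Fin (d i.1)

abbrev VJ (d : Fin n → ℕ) (J : Finset (Fin n)) : Type := PConfig d J → ℂ

/-- The full configuration equal to `a` on `J` and to `b` on `Jᶜ`. -/
def merge (d : Fin n → ℕ) (J : Finset (Fin n)) (a : PConfig d J) (b : PConfig d Jᶜ) :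
    Config d := fun i =>
  if h : i ∈ J then a ⟨i, h⟩ else b ⟨i, Finset.mem_compl.mpr h⟩

/-- The contraction `ψ ↦ ψ_b`, as a linear map from `V d` to `VJ d J`. -/
def contrL (d : Fin n → ℕ) (J : Finset (Fin n)) (b : PConfig d Jᶜ) :
    V d →ₗ[ℂ] VJ d J where
  toFun ψ := fun a => ψ (merge d J a b)
  map_add' _ _ := rfl
  map_smul' _ _ := rfl

/-- The reduced space `red_J(S)`: the span of all contractions `ψ_b` with `ψ ∈ S`. -/
noncomputable def red (d : Fin n → ℕ) (J : Finset (Fin n)) (S : Submodule ℂ (V d)) :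
    Submodule ℂ (VJ d J) :=
  Submodule.span ℂ {φ | ∃ ψ ∈ S, ∃ b : PConfig d Jᶜ, φ = contrL d J b ψ}

/-- The `k`-reduced tuple `L_k(S) = (red_J(S))_J` (only the components with
`J.card = k` are relevant). -/
noncomputable def Lk (d : Fin n → ℕ) (S : Submodule ℂ (V d)) :
    ∀ J : Finset (Fin n), Submodule ℂ (VJ d J) :=
  fun J => red d J S

/-- The maximal pre-image of a tuple `η`:
`{ψ : ψ_b ∈ η_J for every k-element subset J and every Jᶜ-configuration b}`. -/
noncomputable def MPI (d : Fin n → ℕ) (k : ℕ) (η : ∀ J : Finset (Fin n), Submodule ℂ (VJ d J)) :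
    Submodule ℂ (V d) :=
  ⨅ (J : Finset (Fin n)) (_ : J.card = k) (b : PConfig d Jᶜ), (η J).comap (contrL d J b)

/-- `G` is a `k`-local frustration-free ground-state space: `G` is nonzero and is
cut out by a family of subspaces `W_J ≤ V_J` via the contraction conditions. -/
def IsFFGroundSpace (d : Fin n → ℕ) (k : ℕ) (G : Submodule ℂ (V d)) : Prop :=
  G ≠ ⊥ ∧ ∃ W : ∀ J : Finset (Fin n), Submodule ℂ (VJ d J),
    G = ⨅ (J : Finset (Fin n)) (_ : J.card = k) (b : PConfig d Jᶜ), (W J).comap (contrL d J b)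

end GSS

open GSS

/-- `L_k(S)` is join irreducible in `Θ_k`. -/
def JoinIrred {n : ℕ} (d : Fin n → ℕ) (k : ℕ) (S : Submodule ℂ (V d)) : Prop :=
  ∀ S₁ S₂ : Submodule ℂ (V d), S₁ ≠ ⊥ → S₂ ≠ ⊥ →
    (∀ J : Finset (Fin n), J.card = k → red d J S = red d J S₁ ⊔ red d J S₂) →
    (∀ J : Finset (Fin n), J.card = k → red d J S = red d J S₁) ∨
    (∀ J : Finset (Fin n), J.card = k → red d J S = red d J S₂)

/-!
`S ↦ L_k(S)` and `η ↦ MPI(η)` form a Galois connection between subspaces of `V` and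
tuples of local subspaces, and the `k`-local FF ground-state spaces are exactly its
nonzero closed elements, `MPI(L_k(G)) = G`. Since `M = MPI(L_k(S₀))` has
`L_k(M) = L_k(S₀)`, a decomposition `M = G₁ ⊔ G₂` into ground-state spaces gives
`L_k(S₀) = L_k(G₁) ∨ L_k(G₂)`; join irreducibility yields, say, `L_k(S₀) = L_k(G₁)`,
and then `M = MPI(L_k(G₁)) = G₁`, so `G₁` is not proper.
-/

namespace GSS

variable {n : ℕ} (d : Fin n → ℕ)

lemma red_mono (J : Finset (Fin n)) : Monotone (red d J) := by
  intro S T hST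
  apply Submodule.span_mono
  rintro φ ⟨ψ, hψ, b, rfl⟩
  exact ⟨ψ, hST hψ, b, rfl⟩

lemma contrL_mem_red (J : Finset (Fin n)) {S : Submodule ℂ (V d)} {ψ : V d} (hψ : ψ ∈ S)
    (b : PConfig d Jᶜ) : contrL d J b ψ ∈ red d J S :=
  Submodule.subset_span ⟨ψ, hψ, b, rfl⟩

lemma red_sup (J : Finset (Fin n)) (S₁ S₂ : Submodule ℂ (V d)) :
    red d J (S₁ ⊔ S₂) = red d J S₁ ⊔ red d J S₂ := by
  refine le_antisymm (Submodule.span_le.mpr ?_) ((red_mono d J).le_map_sup S₁ S₂)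
  rintro φ ⟨ψ, hψ, b, rfl⟩
  obtain ⟨y, hy, z, hz, rfl⟩ := Submodule.mem_sup.mp hψ
  rw [map_add]
  exact Submodule.add_mem_sup (contrL_mem_red d J hy b) (contrL_mem_red d J hz b)

variable {d} {k : ℕ}

lemma mem_MPI_iff {η : ∀ J : Finset (Fin n), Submodule ℂ (VJ d J)} {ψ : V d} :
    ψ ∈ MPI d k η ↔
      ∀ J : Finset (Fin n), J.card = k → ∀ b : PConfig d Jᶜ, contrL d J b ψ ∈ η J := by
  simp only [MPI, Submodule.mem_iInf, Submodule.mem_comap]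

lemma le_MPI_iff {S : Submodule ℂ (V d)} {η : ∀ J : Finset (Fin n), Submodule ℂ (VJ d J)} :
    S ≤ MPI d k η ↔ ∀ J : Finset (Fin n), J.card = k → red d J S ≤ η J := by
  constructor
  · intro hS J hJ
    refine Submodule.span_le.mpr ?_
    rintro φ ⟨ψ, hψ, b, rfl⟩
    exact mem_MPI_iff.mp (hS hψ) J hJ b
  · intro hS ψ hψ
    exact mem_MPI_iff.mpr fun J hJ b => hS J hJ (contrL_mem_red d J hψ b)

lemma le_MPI_Lk (S : Submodule ℂ (V d)) : S ≤ MPI d k (Lk d S) :=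
  le_MPI_iff.mpr fun _ _ => le_rfl

lemma red_MPI_Lk (S : Submodule ℂ (V d)) {J : Finset (Fin n)} (hJ : J.card = k) :
    red d J (MPI d k (Lk d S)) = red d J S :=
  le_antisymm (le_MPI_iff.mp le_rfl J hJ) (red_mono d J (le_MPI_Lk S))

lemma MPI_Lk_congr {S T : Submodule ℂ (V d)}
    (h : ∀ J : Finset (Fin n), J.card = k → red d J S = red d J T) :
    MPI d k (Lk d S) = MPI d k (Lk d T) := by
  ext ψ
  simp only [mem_MPI_iff]
  exact forall₂_congr fun J hJ => by rw [Lk, Lk, h J hJ]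

lemma MPI_Lk_MPI (η : ∀ J : Finset (Fin n), Submodule ℂ (VJ d J)) :
    MPI d k (Lk d (MPI d k η)) = MPI d k η :=
  le_antisymm
    (le_MPI_iff.mpr fun J hJ => (red_MPI_Lk _ hJ).trans_le (le_MPI_iff.mp le_rfl J hJ))
    (le_MPI_Lk _)

lemma IsFFGroundSpace.MPI_Lk_eq {G : Submodule ℂ (V d)} (hG : IsFFGroundSpace d k G) :
    MPI d k (Lk d G) = G := by
  obtain ⟨-, W, rfl⟩ := hG
  exact MPI_Lk_MPI W

end GSS

theorem stmt15_general (n : ℕ) (d : Fin n → ℕ) (k : ℕ)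
    (S₀ : Submodule ℂ (V d)) (hS₀ : S₀ ≠ ⊥) (hirr : JoinIrred d k S₀) :
    IsFFGroundSpace d k (MPI d k (Lk d S₀)) ∧
    ¬ ∃ G₁ G₂ : Submodule ℂ (V d), IsFFGroundSpace d k G₁ ∧ IsFFGroundSpace d k G₂ ∧
      G₁ < MPI d k (Lk d S₀) ∧ G₂ < MPI d k (Lk d S₀) ∧
      G₁ ⊔ G₂ = MPI d k (Lk d S₀) := by
  refine ⟨⟨fun hM => hS₀ (eq_bot_iff.mpr (hM ▸ le_MPI_Lk S₀)), Lk d S₀, rfl⟩, ?_⟩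
  rintro ⟨G₁, G₂, hG₁, hG₂, hlt₁, hlt₂, hsup⟩
  have hred : ∀ J : Finset (Fin n), J.card = k →
      red d J S₀ = red d J G₁ ⊔ red d J G₂ := fun J hJ => by
    rw [← red_sup, hsup, red_MPI_Lk S₀ hJ]
  rcases hirr G₁ G₂ hG₁.1 hG₂.1 hred with h | h
  · exact hlt₁.ne (by rw [MPI_Lk_congr h, hG₁.MPI_Lk_eq])
  · exact hlt₂.ne (by rw [MPI_Lk_congr h, hG₂.MPI_Lk_eq])

/-- if `L_k(S₀)` is join irreducible in `Θ_k`, then `M = MPI(L_k(S₀))`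
is an irreducible ground-state space: it is a `k`-local FF ground-state space which
is not the sum of two proper subspaces that are themselves `k`-local FF
ground-state spaces. -/
theorem stmt15 (n : ℕ) (hn : 1 ≤ n) (d : Fin n → ℕ) (k : ℕ) (hk1 : 1 ≤ k) (hk2 : k ≤ n)
    (S₀ : Submodule ℂ (V d)) (hS₀ : S₀ ≠ ⊥) (hirr : JoinIrred d k S₀) :
    IsFFGroundSpace d k (MPI d k (Lk d S₀)) ∧
    ¬ ∃ G₁ G₂ : Submodule ℂ (V d), IsFFGroundSpace d k G₁ ∧ IsFFGroundSpace d k G₂ ∧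
      G₁ < MPI d k (Lk d S₀) ∧ G₂ < MPI d k (Lk d S₀) ∧
      G₁ ⊔ G₂ = MPI d k (Lk d S₀) :=
  stmt15_general n d k S₀ hS₀ hirr
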